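/- Let A be a C*-subalgebra of B(H), and let P, Q be orthogonal projections on H such that [a, P] and [a, Q] are compact for all a ∈ A. If ran(P) + ran(Q) is closed and R is the orthogonal projection onto ran(P) + ran(Q), then [a, R] is compact for all a ∈ A. -/

import Mathlib

/-!
Put `T = P + Q`. Since `ran P + ran Q = ran R` is closed, the open mapping theorem gives
`0 < δ ≤ 1` with `δ R ≤ T`, while `T ≤ 2 R` because `P, Q ≤ R`. Hence `B = R - T / 2` satisfies
`0 ≤ B ≤ 1 - δ / 2`, so `‖B‖ < 1`. As `1 - T / 2 = (1 - R) + B` with `(1 - R) B = B (1 - R) = 0`,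
`1 - (1 - T / 2) ^ n = R - B ^ n` converges in norm to `R`. The operators `X` with `[a, X]`
compact form a norm-closed subalgebra containing `P` and `Q`, hence these polynomials in `T`,
hence `R`.
-/

open Filter Topology
open scoped InnerProductSpace

theorem IsIdempotentElem.add_pow_succ_of_mul_eq_zero {R : Type*} [Semiring R] {e b : R}
    (he : IsIdempotentElem e) (heb : e * b = 0) (hbe : b * e = 0) (n : ℕ) :
    (e + b) ^ (n + 1) = e + b ^ (n + 1) := by
  induction n with
  | zero => simp
  | succ n ih =>
    rw [pow_succ, ih, add_mul, mul_add, mul_add, he.eq, heb, pow_succ b n, mul_assoc _ b e, hbe]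
    simp [pow_succ]

section EssentialCommutant

variable {𝕜 E : Type*} [NontriviallyNormedField 𝕜] [NormedAddCommGroup E] [NormedSpace 𝕜 E]

def essentialCommutant (a : E →L[𝕜] E) : Subalgebra 𝕜 (E →L[𝕜] E) where
  carrier := {x | IsCompactOperator ⇑(a * x - x * a)}
  mul_mem' {x y} hx hy := by
    have h : a * (x * y) - x * y * a = (a * x - x * a) * y + x * (a * y - y * a) := by
      noncomm_ring
    change IsCompactOperator _
    rw [h]
    exact (hx.comp_clm y).add (hy.clm_comp x)
  add_mem' {x y} hx hy := by
    have h : a * (x + y) - (x + y) * a = (a * x - x * a) + (a * y - y * a) := by noncomm_ring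
    change IsCompactOperator _
    rw [h]
    exact hx.add hy
  algebraMap_mem' c := by
    change IsCompactOperator _
    rw [Algebra.commutes, sub_self]
    exact isCompactOperator_zero

theorem isClosed_essentialCommutant [CompleteSpace E] (a : E →L[𝕜] E) :
    IsClosed (essentialCommutant a : Set (E →L[𝕜] E)) :=
  isClosed_setOfPred_isCompactOperator.preimage
    ((continuous_const.mul continuous_id).sub (continuous_id.mul continuous_const))

end EssentialCommutant

theorem Submodule.exists_norm_le_of_isClosed_sup {𝕜 E : Type*} [NontriviallyNormedField 𝕜]
    [NormedAddCommGroup E] [NormedSpace 𝕜 E] [CompleteSpace E] {U V : Submodule 𝕜 E}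
    (hU : IsClosed (U : Set E)) (hV : IsClosed (V : Set E))
    (hUV : IsClosed ((U ⊔ V : Submodule 𝕜 E) : Set E)) :
    ∃ C > 0, ∀ x ∈ U ⊔ V, ∃ u ∈ U, ∃ v ∈ V, u + v = x ∧ ‖u‖ ≤ C * ‖x‖ ∧ ‖v‖ ≤ C * ‖x‖ := by
  have := hU.completeSpace_coe
  have := hV.completeSpace_coe
  have := hUV.completeSpace_coe
  let J : U × V →L[𝕜] (U ⊔ V : Submodule 𝕜 E) :=
    (U.subtypeL.coprod V.subtypeL).codRestrict (U ⊔ V) fun z ↦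
      add_mem (mem_sup_left z.1.2) (mem_sup_right z.2.2)
  have hJ : Function.Surjective J := by
    rintro ⟨x, hx⟩
    obtain ⟨u, hu, v, hv, rfl⟩ := mem_sup.mp hx
    exact ⟨(⟨u, hu⟩, ⟨v, hv⟩), rfl⟩
  obtain ⟨C, hC, hJC⟩ := J.exists_preimage_norm_le hJ
  refine ⟨C, hC, fun x hx ↦ ?_⟩
  obtain ⟨⟨u, v⟩, huv, hnorm⟩ := hJC ⟨x, hx⟩
  exact ⟨u, u.2, v, v.2, congr_arg Subtype.val huv, (norm_fst_le _).trans hnorm,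
    (norm_snd_le _).trans hnorm⟩

theorem IsIdempotentElem.apply_of_mem_range {R M : Type*} [Semiring R] [AddCommMonoid M]
    [TopologicalSpace M] [Module R M] {p : M →L[R] M} (hp : IsIdempotentElem p) {x : M}
    (hx : x ∈ LinearMap.range p.toLinearMap) : p x = x := by
  obtain ⟨y, rfl⟩ := hx
  exact congr($hp y)

section StarProjection

variable {𝕜 E : Type*} [RCLike 𝕜] [NormedAddCommGroup E] [InnerProductSpace 𝕜 E]
  [CompleteSpace E] {P Q : E →L[𝕜] E}

theorem IsStarProjection.re_inner_apply_self (hP : IsStarProjection P) (x : E) :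
    RCLike.re ⟪P x, x⟫_𝕜 = ‖P x‖ ^ 2 := by
  rw [P.apply_norm_sq_eq_inner_adjoint_left, ← ContinuousLinearMap.star_eq_adjoint,
    hP.isSelfAdjoint.star_eq, ← ContinuousLinearMap.mul_def, hP.isIdempotentElem.eq]

theorem IsStarProjection.le_of_range_le (hP : IsStarProjection P) (hQ : IsStarProjection Q)
    (h : LinearMap.range P.toLinearMap ≤ LinearMap.range Q.toLinearMap) : P ≤ Q := by
  rw [← ContinuousLinearMap.coe_le_coe_iff]
  exact ((ContinuousLinearMap.IsStarProjection.isSymmetricProjection hP).le_iff_range_le_range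
    (ContinuousLinearMap.IsStarProjection.isSymmetricProjection hQ)).mpr h

theorem IsStarProjection.exists_norm_le_of_isClosed_sup (hP : IsStarProjection P)
    (hQ : IsStarProjection Q)
    (hPQ : IsClosed ((LinearMap.range P.toLinearMap ⊔ LinearMap.range Q.toLinearMap :
        Submodule 𝕜 E) : Set E)) :
    ∃ C > 0, ∀ x ∈ LinearMap.range P.toLinearMap ⊔ LinearMap.range Q.toLinearMap,
      ‖x‖ ≤ C * (‖P x‖ + ‖Q x‖) := by
  obtain ⟨C, hC, hdecomp⟩ := Submodule.exists_norm_le_of_isClosed_sup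
    (ContinuousLinearMap.IsIdempotentElem.isClosed_range hP.isIdempotentElem)
    (ContinuousLinearMap.IsIdempotentElem.isClosed_range hQ.isIdempotentElem) hPQ
  refine ⟨C, hC, fun x hx ↦ ?_⟩
  obtain ⟨u, hu, v, hv, rfl, hun, hvn⟩ := hdecomp x hx
  have hPu : P u = u := hP.isIdempotentElem.apply_of_mem_range hu
  have hQv : Q v = v := hQ.isIdempotentElem.apply_of_mem_range hv
  have hsq : ‖u + v‖ ^ 2 ≤ C * ‖u + v‖ * (‖P (u + v)‖ + ‖Q (u + v)‖) :=
    calc ‖u + v‖ ^ 2 = RCLike.re ⟪P (u + v), u⟫_𝕜 + RCLike.re ⟪Q (u + v), v⟫_𝕜 := by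
          rw [hP.isSelfAdjoint.isSymmetric.apply_clm, hQ.isSelfAdjoint.isSymmetric.apply_clm, hPu,
            hQv, ← map_add, ← inner_add_right, inner_self_eq_norm_sq]
      _ ≤ ‖P (u + v)‖ * ‖u‖ + ‖Q (u + v)‖ * ‖v‖ :=
          add_le_add (re_inner_le_norm _ _) (re_inner_le_norm _ _)
      _ ≤ ‖P (u + v)‖ * (C * ‖u + v‖) + ‖Q (u + v)‖ * (C * ‖u + v‖) := by gcongr
      _ = C * ‖u + v‖ * (‖P (u + v)‖ + ‖Q (u + v)‖) := by ring
  rcases (norm_nonneg (u + v)).eq_or_lt with h0 | hpos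
  · rw [← h0]; positivity
  · nlinarith

end StarProjection

theorem IsStarProjection.tendsto_one_sub_one_sub_pow {A : Type*} [CStarAlgebra A]
    [PartialOrder A] [StarOrderedRing A] {r t : A} {δ : ℝ} (hr : IsStarProjection r)
    (hrt : r * t = t) (hδ : 0 < δ) (hδt : δ • r ≤ t) (htr : t ≤ r) :
    Tendsto (fun n ↦ 1 - (1 - t) ^ n) atTop (𝓝 r) := by
  set m := min δ 1
  have hm : 0 < m := lt_min hδ one_pos
  have hmt : m • r ≤ t := (smul_le_smul_of_nonneg_right (min_le_left δ 1) hr.nonneg).trans hδt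
  have hb0 : 0 ≤ r - t := sub_nonneg.mpr htr
  have hbm : r - t ≤ algebraMap ℝ A (1 - m) := by
    have : algebraMap ℝ A (1 - m) - (r - t) = (1 - m) • (1 - r) + (t - m • r) := by
      rw [Algebra.algebraMap_eq_smul_one]
      module
    rw [← sub_nonneg, this]
    exact add_nonneg (smul_nonneg (sub_nonneg.mpr (min_le_right δ 1)) hr.one_sub_nonneg)
      (sub_nonneg.mpr hmt)
  have hnorm : ‖r - t‖ < 1 :=
    ((CStarAlgebra.norm_le_iff_le_algebraMap _ (sub_nonneg.mpr (min_le_right δ 1)) hb0).mpr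
      hbm).trans_lt (sub_lt_self 1 hm)
  have htr' : t * r = t := by
    have ht : IsSelfAdjoint t := IsSelfAdjoint.of_nonneg ((smul_nonneg hδ.le hr.nonneg).trans hδt)
    simpa [ht.star_eq, hr.isSelfAdjoint.star_eq] using congr(star $hrt)
  have hpow (n : ℕ) : 1 - (1 - t) ^ (n + 1) = r - (r - t) ^ (n + 1) := by
    have hsplit : 1 - t = (1 - r) + (r - t) := by abel
    rw [hsplit, hr.one_sub.isIdempotentElem.add_pow_succ_of_mul_eq_zero]
    · abel
    · simp [sub_mul, mul_sub, hr.isIdempotentElem.eq, hrt]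
    · simp [sub_mul, mul_sub, hr.isIdempotentElem.eq, htr']
  rw [← tendsto_add_atTop_iff_nat 1]
  simp_rw [hpow]
  simpa using tendsto_const_nhds.sub
    ((tendsto_pow_atTop_nhds_zero_of_norm_lt_one hnorm).comp (tendsto_add_atTop_nat 1))

section ComplexHilbert

variable {H : Type*} [NormedAddCommGroup H] [InnerProductSpace ℂ H] [CompleteSpace H]
  {P Q R : H →L[ℂ] H}

theorem IsStarProjection.exists_smul_le_add (hP : IsStarProjection P) (hQ : IsStarProjection Q)
    (hR : IsStarProjection R)
    (hRPQ : LinearMap.range R.toLinearMap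
      = LinearMap.range P.toLinearMap ⊔ LinearMap.range Q.toLinearMap) :
    ∃ δ : ℝ, 0 < δ ∧ δ • R ≤ P + Q := by
  obtain ⟨C, hC, hbound⟩ := hP.exists_norm_le_of_isClosed_sup hQ
    (hRPQ ▸ ContinuousLinearMap.IsIdempotentElem.isClosed_range hR.isIdempotentElem)
  have hPR : P * R = P :=
    (hP.le_iff_mul_eq_left hR).mp (hP.le_of_range_le hR (hRPQ ▸ le_sup_left))
  have hQR : Q * R = Q :=
    (hQ.le_iff_mul_eq_left hR).mp (hQ.le_of_range_le hR (hRPQ ▸ le_sup_right))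
  refine ⟨(2 * C ^ 2)⁻¹, by positivity, ?_⟩
  rw [ContinuousLinearMap.le_def, ContinuousLinearMap.isPositive_def']
  refine ⟨(hP.isSelfAdjoint.add hQ.isSelfAdjoint).sub
    ((IsSelfAdjoint.all _).smul hR.isSelfAdjoint), fun x ↦ ?_⟩
  have hRx : ‖R x‖ ≤ C * (‖P x‖ + ‖Q x‖) := by
    have := hbound (R x) (hRPQ ▸ ⟨x, rfl⟩)
    rwa [show P (R x) = P x from congr($hPR x), show Q (R x) = Q x from congr($hQR x)] at this
  have hRx_sq : ‖R x‖ ^ 2 ≤ 2 * C ^ 2 * (‖P x‖ ^ 2 + ‖Q x‖ ^ 2) := by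
    nlinarith [sq_nonneg (‖P x‖ - ‖Q x‖), norm_nonneg (R x)]
  simp only [ContinuousLinearMap.reApplyInnerSelf, sub_apply, add_apply, inner_sub_left,
    inner_add_left, map_sub, map_add, hP.re_inner_apply_self, hQ.re_inner_apply_self]
  rw [smul_apply, ← Complex.coe_smul, inner_smul_left, Complex.conj_ofReal,
    RCLike.re_to_complex, Complex.re_ofReal_mul, ← RCLike.re_to_complex,
    hR.re_inner_apply_self, sub_nonneg, inv_mul_le_iff₀ (by positivity)]
  exact hRx_sq

theorem IsStarProjection.tendsto_one_sub_one_sub_half_add_pow (hP : IsStarProjection P)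
    (hQ : IsStarProjection Q) (hR : IsStarProjection R)
    (hRPQ : LinearMap.range R.toLinearMap
      = LinearMap.range P.toLinearMap ⊔ LinearMap.range Q.toLinearMap) :
    Tendsto (fun n ↦ 1 - (1 - (2⁻¹ : ℝ) • (P + Q)) ^ n) atTop (𝓝 R) := by
  obtain ⟨δ, hδ, hδR⟩ := hP.exists_smul_le_add hQ hR hRPQ
  have hPR : P ≤ R := hP.le_of_range_le hR (hRPQ ▸ le_sup_left)
  have hQR : Q ≤ R := hQ.le_of_range_le hR (hRPQ ▸ le_sup_right)
  refine hR.tendsto_one_sub_one_sub_pow (δ := 2⁻¹ * δ) ?_ (by positivity) ?_ ?_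
  · rw [mul_smul_comm, mul_add, (hP.le_iff_mul_eq_right hR).mp hPR,
      (hQ.le_iff_mul_eq_right hR).mp hQR]
  · rw [mul_smul]
    exact smul_le_smul_of_nonneg_left hδR (by norm_num)
  · calc (2⁻¹ : ℝ) • (P + Q) ≤ (2⁻¹ : ℝ) • (R + R) :=
          smul_le_smul_of_nonneg_left (add_le_add hPR hQR) (by norm_num)
      _ = R := by module

end ComplexHilbert

theorem essentiallyNormal_projection_onto_sum_general {H : Type*} [NormedAddCommGroup H]
    [InnerProductSpace ℂ H] [CompleteSpace H]
    (A : StarSubalgebra ℂ (H →L[ℂ] H))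
    (P Q R : H →L[ℂ] H)
    (hPsa : IsSelfAdjoint P) (hP2 : P * P = P)
    (hQsa : IsSelfAdjoint Q) (hQ2 : Q * Q = Q)
    (hPc : ∀ a ∈ A, IsCompactOperator ⇑(a * P - P * a))
    (hQc : ∀ a ∈ A, IsCompactOperator ⇑(a * Q - Q * a))
    (hRsa : IsSelfAdjoint R) (hR2 : R * R = R)
    (hRrange : LinearMap.range R.toLinearMap
      = LinearMap.range P.toLinearMap ⊔ LinearMap.range Q.toLinearMap) :
    ∀ a ∈ A, IsCompactOperator ⇑(a * R - R * a) := by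
  intro a ha
  have hP : IsStarProjection P := ⟨hP2, hPsa⟩
  have hQ : IsStarProjection Q := ⟨hQ2, hQsa⟩
  have hR : IsStarProjection R := ⟨hR2, hRsa⟩
  have hPQ : P + Q ∈ essentialCommutant a := add_mem (hPc a ha) (hQc a ha)
  have hmem (n : ℕ) : 1 - (1 - (2⁻¹ : ℝ) • (P + Q)) ^ n ∈ essentialCommutant a :=
    sub_mem (one_mem _) (pow_mem (sub_mem (one_mem _) (SMulMemClass.smul_mem _ hPQ)) n)
  exact (isClosed_essentialCommutant a).mem_of_tendsto
    (hP.tendsto_one_sub_one_sub_half_add_pow hQ hR hRrange) (.of_forall hmem)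

/-- Let `A` be a C*-subalgebra of `B(H)` and `P`, `Q` orthogonal projections whose commutators
with every element of `A` are compact. If `ran P + ran Q` is closed and `R` is the orthogonal
projection onto `ran P + ran Q`, then `[a, R]` is compact for every `a ∈ A`. -/
theorem essentiallyNormal_projection_onto_sum {H : Type*} [NormedAddCommGroup H]
    [InnerProductSpace ℂ H] [CompleteSpace H]
    (A : StarSubalgebra ℂ (H →L[ℂ] H)) (hA : IsClosed (A : Set (H →L[ℂ] H)))
    (P Q R : H →L[ℂ] H)
    (hPsa : IsSelfAdjoint P) (hP2 : P * P = P)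
    (hQsa : IsSelfAdjoint Q) (hQ2 : Q * Q = Q)
    (hPc : ∀ a ∈ A, IsCompactOperator ⇑(a * P - P * a))
    (hQc : ∀ a ∈ A, IsCompactOperator ⇑(a * Q - Q * a))
    (hclosed : IsClosed ((LinearMap.range P.toLinearMap ⊔ LinearMap.range Q.toLinearMap :
        Submodule ℂ H) : Set H))
    (hRsa : IsSelfAdjoint R) (hR2 : R * R = R)
    (hRrange : LinearMap.range R.toLinearMap
      = LinearMap.range P.toLinearMap ⊔ LinearMap.range Q.toLinearMap) :
    ∀ a ∈ A, IsCompactOperator ⇑(a * R - R * a) :=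
  essentiallyNormal_projection_onto_sum_general A P Q R hPsa hP2 hQsa hQ2 hPc hQc hRsa hR2 hRrange
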